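/- arXiv:1206.1390 — 3 statements merged into one kernel-verified Lean document; each statement's English description precedes it below -/
import Mathlib

section
/- In Flexible GMRES, if the j-th subdiagonal entry H(j+1,j) = 0 and the leading j-by-j Hessenberg submatrix H(1:j,1:j) is nonsingular, then the approximate solution x_j = x_0 + Z_j y_j, with y_j solving H(1:j,1:j) y_j = beta e_1, is an exact solution of Ax = b. -/
/-!
The flexible Arnoldi relation reads `A Z = Q H`. At breakdown the last row of the Hessenberg
matrix `H` vanishes, so `A Z y = Q H y` only involves `q_1, …, q_j` and the square block,
giving `A Z y = β q_1 = r_0`, i.e. `A (x_0 + Z y) = b`.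
-/

open Matrix

noncomputable def vnorm {n : ℕ} (v : Fin n → ℝ) : ℝ := Real.sqrt (∑ i, (v i) ^ 2)

theorem Matrix.sum_smul_sum_smul_eq_sum_mulVec_smul {R M ι κ : Type*} [CommSemiring R]
    [AddCommMonoid M] [Module R M] [Fintype ι] [Fintype κ]
    (H : Matrix ι κ R) (q : ι → M) (y : κ → R) :
    ∑ k, y k • ∑ i, H i k • q i = ∑ i, (H *ᵥ y) i • q i := by
  simp only [mulVec, dotProduct, Finset.smul_sum, smul_smul, Finset.sum_smul]
  rw [Finset.sum_comm]
  simp only [mul_comm]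

theorem Matrix.hessenberg_last_row_eq_zero {α : Type*} [Zero α] {m : ℕ} (hm : 0 < m)
    (H : Matrix (Fin (m + 1)) (Fin m) α)
    (hHess : ∀ (i : Fin (m + 1)) (k : Fin m), (k : ℕ) + 1 < (i : ℕ) → H i k = 0)
    (hsub : H (Fin.last m) ⟨m - 1, Nat.sub_one_lt_of_lt hm⟩ = 0) (k : Fin m) :
    H (Fin.last m) k = 0 := by
  rcases (Nat.le_sub_one_of_lt k.isLt).lt_or_eq with hk | hk
  · exact hHess _ _ (by simp only [Fin.val_last]; omega)
  · rwa [show k = ⟨m - 1, by omega⟩ from Fin.ext hk]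

/-- In Flexible GMRES, if `H(j+1,j) = 0` and the leading `j × j` Hessenberg submatrix
`H(1:j,1:j)` is nonsingular, then `x_j = x_0 + Z_j y_j`, with `y_j` solving
`H(1:j,1:j) y_j = β e_1`, is an exact solution of `A x = b`. -/
theorem fgmres_breakdown_exact_solution
    {n m : ℕ} (hm : 0 < m)
    (A : Matrix (Fin n) (Fin n) ℝ)
    (b x0 : Fin n → ℝ)
    (r0 : Fin n → ℝ) (hr0 : r0 = b - A.mulVec x0)
    (β : ℝ) (hβpos : 0 < β)
    (q : Fin (m + 1) → Fin n → ℝ)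
    (hq0 : q 0 = β⁻¹ • r0)
    (z : Fin m → Fin n → ℝ)
    (H : Matrix (Fin (m + 1)) (Fin m) ℝ)
    (hHess : ∀ (i : Fin (m + 1)) (k : Fin m), (k : ℕ) + 1 < (i : ℕ) → H i k = 0)
    (hrel : ∀ k : Fin m, A.mulVec (z k) = ∑ i, H i k • q i)
    (hzero : H (Fin.last m) ⟨m - 1, by omega⟩ = 0)
    (Hsq : Matrix (Fin m) (Fin m) ℝ)
    (hHsq : Hsq = Matrix.of fun i k : Fin m => H (Fin.castSucc i) k)
    (y : Fin m → ℝ)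
    (hy : Hsq.mulVec y = fun i => if i = (⟨0, hm⟩ : Fin m) then β else 0) :
    A.mulVec (x0 + ∑ k, y k • z k) = b := by
  have hlast : (H *ᵥ y) (Fin.last m) = 0 := by
    simp [mulVec, dotProduct, H.hessenberg_last_row_eq_zero hm hHess hzero]
  have hsq : ∀ i : Fin m, (H *ᵥ y) i.castSucc = (Hsq *ᵥ y) i := by
    subst hHsq
    exact fun _ => rfl
  have hAZy : A *ᵥ ∑ k, y k • z k = β • q 0 :=
    calc A *ᵥ ∑ k, y k • z k = ∑ k, y k • ∑ i, H i k • q i := by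
          simp only [mulVec_sum, mulVec_smul, hrel]
      _ = ∑ i, (H *ᵥ y) i • q i := Matrix.sum_smul_sum_smul_eq_sum_mulVec_smul H q y
      _ = ∑ i : Fin m, (Hsq *ᵥ y) i • q i.castSucc := by
          simp [Fin.sum_univ_castSucc, hlast, hsq]
      _ = β • q 0 := by
          simp only [hy, ite_smul, zero_smul, Finset.sum_ite_eq', Finset.mem_univ, if_true]
          rfl
  rw [mulVec_add, hAZy, hq0, smul_inv_smul₀ hβpos.ne', hr0, add_sub_cancel]
end

section
/- Any nonincreasing residual history is attainable by GMRES (Greenbaum–Pták–Strakoš, existence part for fully decreasing case): given any positive reals f_0 ≥ f_1 ≥ ... ≥ f_{n-1} > 0, there exist a nonsingular n-by-n matrix A and a vector b with ||b|| = f_0 such that the GMRES residual norms satisfy ||b - A x_j|| = f_j for j = 0, ..., n-1, where x_j minimizes the residual over K_j(A, b) (with x_0 = 0). -/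
open Matrix

def krylov {n : ℕ} (A : Matrix (Fin n) (Fin n) ℝ) (r : Fin n → ℝ) (j : ℕ) :
    Submodule ℝ (Fin n → ℝ) :=
  Submodule.span ℝ {v | ∃ i < j, v = (A ^ i).mulVec r}

/-! The construction of Greenbaum, Pták and Strakoš. Take `b` with `b_k² = f_k² - f_{k+1}²`
(where `f_n = 0`), so that `∑_{k ≥ j} b_k² = f_j²`. Since `b_{n-1} ≠ 0`, the vectors
`b, e_0, …, e_{n-2}` form a basis, and the matrix `A` sending them to `e_0, …, e_{n-1}` is
nonsingular with `A^{i+1} b = e_i`. Hence `A K_j(A, b) = span {e_0, …, e_{j-1}}`: the best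
approximation of `b` from this space kills its first `j` coordinates, and the residual is the
norm `f_j` of the tail `(b_j, …, b_{n-1})`. -/

theorem exists_det_ne_zero_pow_succ_mulVec_eq_single {K : Type*} [Field K] {m : ℕ}
    (b : Fin (m + 1) → K) (hb : b (Fin.last m) ≠ 0) :
    ∃ A : Matrix (Fin (m + 1)) (Fin (m + 1)) K,
      A.det ≠ 0 ∧ ∀ i : Fin (m + 1), (A ^ ((i : ℕ) + 1)) *ᵥ b = Pi.single i 1 := by
  set v : Fin (m + 1) → Fin (m + 1) → K := Fin.cons b fun i => Pi.single i.castSucc 1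
  have hb_notMem : b ∉ Submodule.span K (Set.range fun i : Fin m => Pi.single i.castSucc 1) := by
    refine fun h => hb (Submodule.span_le.mpr ?_ h : b ∈ LinearMap.ker (LinearMap.proj _))
    rintro _ ⟨i, rfl⟩
    simp [Fin.castSucc_ne_last]
  have hv : LinearIndependent K v := linearIndependent_finCons.mpr
    ⟨(Pi.linearIndependent_single_one (Fin (m + 1)) K).comp _ (Fin.castSucc_injective m),
      hb_notMem⟩
  let B := basisOfLinearIndependentOfCardEqFinrank hv (by simp)
  let φ := B.equiv (Pi.basisFun K (Fin (m + 1))) (Equiv.refl _)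
  have hφ : ∀ i, φ (v i) = Pi.single i 1 := fun i => by
    simpa [B] using B.equiv_apply i (Pi.basisFun K (Fin (m + 1))) (Equiv.refl _)
  refine ⟨LinearMap.toMatrix' φ.toLinearMap, ?_, fun i => ?_⟩
  · rw [LinearMap.det_toMatrix']
    exact φ.isUnit_det'.ne_zero
  induction i using Fin.induction with
  | zero => simpa [LinearMap.toMatrix'_mulVec, v] using hφ 0
  | succ i ih =>
    rw [Fin.val_castSucc] at ih
    rw [Fin.val_succ, pow_succ', ← mulVec_mulVec, ih, LinearMap.toMatrix'_mulVec]
    simpa [v] using hφ i.succ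

section Residual

variable {n : ℕ} {A : Matrix (Fin n) (Fin n) ℝ} {b : Fin n → ℝ}

theorem mulVec_apply_eq_zero_of_mem_krylov
    (hA : ∀ i : Fin n, (A ^ ((i : ℕ) + 1)) *ᵥ b = Pi.single i 1) {j : ℕ} {x : Fin n → ℝ}
    (hx : x ∈ krylov A b j) {k : Fin n} (hk : j ≤ k) : (A *ᵥ x) k = 0 := by
  suffices krylov A b j ≤ LinearMap.ker (LinearMap.proj k ∘ₗ A.mulVecLin) from this hx
  refine Submodule.span_le.mpr ?_
  rintro _ ⟨i, hi, rfl⟩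
  have hik : i < k := by omega
  simp [mulVec_mulVec, ← pow_succ', hA ⟨i, hik.trans k.isLt⟩, Fin.ext_iff, hik.ne']

theorem exists_mem_krylov_mulVec_eq
    (hA : ∀ i : Fin n, (A ^ ((i : ℕ) + 1)) *ᵥ b = Pi.single i 1) (j : ℕ) :
    ∃ x ∈ krylov A b j, A *ᵥ x = fun k : Fin n => if (k : ℕ) < j then b k else 0 := by
  refine ⟨∑ i : Fin n with i.val < j, b i • (A ^ (i : ℕ)) *ᵥ b,
    Submodule.sum_mem _ fun i hi => Submodule.smul_mem _ _
      (Submodule.subset_span ⟨i, (Finset.mem_filter.mp hi).2, rfl⟩), ?_⟩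
  ext k
  simp [mulVec_sum, mulVec_smul, mulVec_mulVec, ← pow_succ', hA, Finset.sum_apply,
    Pi.single_apply]

theorem sInf_residual_krylov
    (hA : ∀ i : Fin n, (A ^ ((i : ℕ) + 1)) *ᵥ b = Pi.single i 1) (j : ℕ) :
    sInf ((fun x => vnorm (b - A *ᵥ x)) '' (krylov A b j : Set (Fin n → ℝ)))
      = √(∑ k : Fin n with j ≤ k.val, b k ^ 2) := by
  refine IsLeast.csInf_eq ⟨?_, ?_⟩
  · obtain ⟨x, hx, hAx⟩ := exists_mem_krylov_mulVec_eq hA j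
    refine ⟨x, hx, ?_⟩
    simp only [vnorm, hAx, Pi.sub_apply, Finset.sum_filter]
    congr 1
    refine Finset.sum_congr rfl fun k _ => ?_
    split_ifs <;> first | omega | ring
  · rintro _ ⟨x, hx, rfl⟩
    refine Real.sqrt_le_sqrt ?_
    calc ∑ k : Fin n with j ≤ k.val, b k ^ 2
        _ = ∑ k : Fin n with j ≤ k.val, (b - A *ᵥ x) k ^ 2 := Finset.sum_congr rfl fun k hk => by
          rw [Pi.sub_apply, mulVec_apply_eq_zero_of_mem_krylov hA hx (Finset.mem_filter.mp hk).2,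
            sub_zero]
        _ ≤ ∑ k, (b - A *ᵥ x) k ^ 2 :=
          Finset.sum_le_sum_of_subset_of_nonneg (Finset.filter_subset _ _)
            fun _ _ _ => sq_nonneg _

end Residual

theorem Fin.sum_filter_le_val_sub_succ {M : Type*} [AddCommGroup M] {n j : ℕ} (hj : j ≤ n)
    (u : ℕ → M) : ∑ k : Fin n with j ≤ k.val, (u k - u (k + 1)) = u j - u n := by
  have hIco : (Finset.range n).filter (j ≤ ·) = Finset.Ico j n := by ext; simp [and_comm]
  rw [Finset.sum_filter,
    Fin.sum_univ_eq_sum_range (fun k => if j ≤ k then u k - u (k + 1) else 0),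
    ← Finset.sum_filter, hIco, Finset.sum_Ico_eq_sub _ hj, Finset.sum_range_sub',
    Finset.sum_range_sub']
  abel

section ResidualCurve

variable {n : ℕ} (f : Fin n → ℝ)

noncomputable def residualSqSeq (i : ℕ) : ℝ := if h : i < n then f ⟨i, h⟩ ^ 2 else 0

noncomputable def rhsOfResidualCurve (k : Fin n) : ℝ :=
  √(residualSqSeq f k - residualSqSeq f (k + 1))

variable {f}

theorem residualSqSeq_succ_le (hf : ∀ j, 0 ≤ f j) (hmono : Antitone f) (i : ℕ) :
    residualSqSeq f (i + 1) ≤ residualSqSeq f i := by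
  unfold residualSqSeq
  split_ifs with h h'
  · exact pow_le_pow_left₀ (hf _) (hmono (Fin.mk_le_mk.mpr i.le_succ)) 2
  · omega
  · positivity
  · rfl

theorem sq_rhsOfResidualCurve (hf : ∀ j, 0 ≤ f j) (hmono : Antitone f) (k : Fin n) :
    rhsOfResidualCurve f k ^ 2 = residualSqSeq f k - residualSqSeq f (k + 1) :=
  Real.sq_sqrt (sub_nonneg.mpr (residualSqSeq_succ_le hf hmono k))

theorem sum_sq_rhsOfResidualCurve_tail (hf : ∀ j, 0 ≤ f j) (hmono : Antitone f) (j : Fin n) :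
    ∑ k : Fin n with (j : ℕ) ≤ k.val, rhsOfResidualCurve f k ^ 2 = f j ^ 2 := by
  simp only [sq_rhsOfResidualCurve hf hmono]
  rw [Fin.sum_filter_le_val_sub_succ j.isLt.le]
  simp [residualSqSeq]

end ResidualCurve

theorem rhsOfResidualCurve_last {m : ℕ} (f : Fin (m + 1) → ℝ) (hf : 0 ≤ f (Fin.last m)) :
    rhsOfResidualCurve f (Fin.last m) = f (Fin.last m) := by
  simpa [rhsOfResidualCurve, residualSqSeq, Fin.last] using Real.sqrt_sq hf

/-- Greenbaum–Pták–Strakoš (existence part): given positive nonincreasing reals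
`f_0 ≥ f_1 ≥ … ≥ f_{n-1} > 0`, there exist a nonsingular `n × n` matrix `A` and a
vector `b` with `‖b‖ = f_0` such that the GMRES residual norms (with `x_0 = 0`)
satisfy `‖b - A x_j‖ = f_j` for `j = 0, …, n-1`. -/
theorem gmres_any_convergence_curve
    {n : ℕ} (hn : 0 < n) (f : Fin n → ℝ)
    (hpos : ∀ j, 0 < f j) (hmono : Antitone f) :
    ∃ (A : Matrix (Fin n) (Fin n) ℝ) (b : Fin n → ℝ),
      A.det ≠ 0 ∧ vnorm b = f ⟨0, hn⟩ ∧
      ∀ j : Fin n,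
        sInf ((fun x => vnorm (b - A.mulVec x)) ''
          ((krylov A b (j : ℕ) : Submodule ℝ (Fin n → ℝ)) : Set (Fin n → ℝ))) = f j := by
  obtain ⟨m, rfl⟩ : ∃ m, n = m + 1 := ⟨n - 1, by omega⟩
  have hf : ∀ j, 0 ≤ f j := fun j => (hpos j).le
  obtain ⟨A, hdet, hA⟩ := exists_det_ne_zero_pow_succ_mulVec_eq_single (rhsOfResidualCurve f)
    (by rw [rhsOfResidualCurve_last f (hf _)]; exact (hpos _).ne')
  refine ⟨A, rhsOfResidualCurve f, hdet, ?_, fun j => ?_⟩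
  · have hsum := sum_sq_rhsOfResidualCurve_tail hf hmono ⟨0, hn⟩
    simp only [zero_le, Finset.filter_true] at hsum
    rw [vnorm, hsum, Real.sqrt_sq (hf _)]
  · rw [sInf_residual_krylov hA, sum_sq_rhsOfResidualCurve_tail hf hmono, Real.sqrt_sq (hf j)]
end

section
/- Complete stagnation of GMRES is possible: for every n ≥ 2 there exists a nonsingular n-by-n real matrix A and a nonzero vector b such that the GMRES residuals satisfy ||b - A x_j|| = ||b|| for all j = 0, 1, ..., n-1; for instance the cyclic shift matrix A with A e_i = e_{i+1 mod n} and b = e_1 has this property. -/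
/-!
Multiplication by `A` maps the Krylov space `span {b, A b, …, A^(j-1) b}` into
`span {A b, …, A^j b}`. If all of these vectors are orthogonal to `b`, then on the Krylov space
`‖b - A x‖² = ‖b‖² + ‖A x‖² ≥ ‖b‖²`, with equality at `x = 0`. For the cyclic shift and
`b = e₀` we have `A^k b = e_k`, which is orthogonal to `e₀` for `0 < k < n`.
-/

open Matrix

theorem vnorm_eq_sqrt_dotProduct {n : ℕ} (v : Fin n → ℝ) : vnorm v = Real.sqrt (v ⬝ᵥ v) := by
  simp only [vnorm, dotProduct, sq]

theorem vnorm_le_vnorm_sub_of_dotProduct_eq_zero {n : ℕ} {b w : Fin n → ℝ} (h : b ⬝ᵥ w = 0) :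
    vnorm b ≤ vnorm (b - w) := by
  rw [vnorm_eq_sqrt_dotProduct, vnorm_eq_sqrt_dotProduct]
  apply Real.sqrt_le_sqrt
  have h' : w ⬝ᵥ b = 0 := by rwa [dotProduct_comm]
  calc b ⬝ᵥ b ≤ b ⬝ᵥ b + w ⬝ᵥ w := le_add_of_nonneg_right (dotProduct_self_star_nonneg w)
    _ = (b - w) ⬝ᵥ (b - w) := by
      simp only [sub_dotProduct, dotProduct_sub, h, h']
      ring

section Krylov

variable {n : ℕ} {A : Matrix (Fin n) (Fin n) ℝ} {b : Fin n → ℝ} {j : ℕ}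

theorem dotProduct_mulVec_eq_zero_of_mem_krylov (h : ∀ i < j, b ⬝ᵥ (A ^ (i + 1) *ᵥ b) = 0)
    {x : Fin n → ℝ} (hx : x ∈ krylov A b j) : b ⬝ᵥ (A *ᵥ x) = 0 := by
  induction hx using Submodule.span_induction with
  | mem v hv =>
    obtain ⟨i, hi, rfl⟩ := hv
    rw [mulVec_mulVec, ← pow_succ', h i hi]
  | zero => simp
  | add y z _ _ hy hz => rw [mulVec_add, dotProduct_add, hy, hz, add_zero]
  | smul c y _ hy => rw [mulVec_smul, dotProduct_smul, hy, smul_zero]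

theorem sInf_residual_krylov_eq_vnorm (h : ∀ i < j, b ⬝ᵥ (A ^ (i + 1) *ᵥ b) = 0) :
    sInf ((fun x => vnorm (b - A *ᵥ x)) '' (krylov A b j : Set (Fin n → ℝ))) = vnorm b := by
  refine IsLeast.csInf_eq ⟨⟨0, zero_mem _, by simp⟩, ?_⟩
  rintro _ ⟨x, hx, rfl⟩
  exact vnorm_le_vnorm_sub_of_dotProduct_eq_zero (dotProduct_mulVec_eq_zero_of_mem_krylov h hx)

end Krylov

namespace Equiv.Perm

variable {ι R : Type*} [Fintype ι] [DecidableEq ι]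

theorem permMatrix_pow [Semiring R] (σ : Perm ι) (k : ℕ) :
    (σ ^ k).permMatrix R = σ.permMatrix R ^ k := by
  induction k with
  | zero => simp
  | succ k ih => rw [pow_succ', permMatrix_mul, ih, pow_succ]

theorem permMatrix_inv_mulVec_single [CommRing R] (σ : Perm ι) (i : ι) :
    σ⁻¹.permMatrix R *ᵥ Pi.single i 1 = Pi.single (σ i) 1 := by
  ext t
  simp [Pi.single_apply, Equiv.symm_apply_eq]

theorem single_dotProduct_permMatrix_mulVec_single [CommRing R] {σ : Perm ι} {i : ι}
    (h : σ i ≠ i) : Pi.single i 1 ⬝ᵥ (σ.permMatrix R *ᵥ Pi.single i 1) = 0 := by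
  simp [h]

end Equiv.Perm

theorem val_finRotate {n : ℕ} (i : Fin n) : (finRotate n i : ℕ) = (i + 1) % n := by
  have := i.neZero
  rw [finRotate_apply, Fin.val_add, Fin.val_one', Nat.add_mod_mod]

theorem val_finRotate_pow_apply {n : ℕ} (i : Fin n) (k : ℕ) :
    ((finRotate n ^ k) i : ℕ) = (i + k) % n := by
  induction k with
  | zero => simp [Nat.mod_eq_of_lt i.isLt]
  | succ k ih =>
    rw [pow_succ', Equiv.Perm.mul_apply, val_finRotate, ih, Nat.mod_add_mod, add_assoc]

theorem finRotate_pow_apply_zero_ne_zero {n k : ℕ} [NeZero n] (hk : 0 < k) (hkn : k < n) :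
    (finRotate n ^ k) 0 ≠ 0 := by
  rw [Ne, Fin.ext_iff, val_finRotate_pow_apply, Fin.val_zero, zero_add, Nat.mod_eq_of_lt hkn]
  exact hk.ne'

/-- Complete stagnation of GMRES is possible: for every `n ≥ 2` there exist a
nonsingular `n × n` matrix `A` (for instance the cyclic shift `A e_i = e_{i+1 mod n}`)
and a nonzero vector `b` such that the GMRES residuals (with `x_0 = 0`) satisfy
`‖b - A x_j‖ = ‖b‖` for `j = 0, 1, …, n-1`. -/
theorem gmres_complete_stagnation
    (n : ℕ) (hn : 2 ≤ n) :
    ∃ (A : Matrix (Fin n) (Fin n) ℝ) (b : Fin n → ℝ),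
      A.det ≠ 0 ∧ b ≠ 0 ∧
      (∀ i : Fin n,
        A.mulVec (fun t => if t = i then 1 else 0) =
          fun t => if t = (⟨((i : ℕ) + 1) % n, Nat.mod_lt _ (by omega)⟩ : Fin n) then 1 else 0) ∧
      ∀ j < n,
        sInf ((fun x => vnorm (b - A.mulVec x)) ''
          ((krylov A b j : Submodule ℝ (Fin n → ℝ)) : Set (Fin n → ℝ))) = vnorm b := by
  have : NeZero n := ⟨by omega⟩
  -- `σ.permMatrix R *ᵥ v = v ∘ σ`, so the shift `e_i ↦ e_{i+1}` is the inverse rotation's matrix.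
  refine ⟨(finRotate n)⁻¹.permMatrix ℝ, Pi.single 0 1, by simp, by simp, fun i => ?_,
    fun j hj => sInf_residual_krylov_eq_vnorm fun k hk => ?_⟩
  · have hsingle (i : Fin n) : (fun t => if t = i then (1 : ℝ) else 0) = Pi.single i 1 :=
      funext fun t => (Pi.single_apply i 1 t).symm
    rw [hsingle, hsingle, Equiv.Perm.permMatrix_inv_mulVec_single]
    congr
    exact Fin.ext (val_finRotate i)
  · rw [← Equiv.Perm.permMatrix_pow]
    refine Equiv.Perm.single_dotProduct_permMatrix_mulVec_single ?_
    rw [inv_pow, Ne, Equiv.Perm.inv_eq_iff_eq, eq_comm]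
    exact finRotate_pow_apply_zero_ne_zero k.succ_pos (by omega)
end
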